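/- arXiv:2402.15629 — 2 statements merged into one kernel-verified Lean document; each statement's English description precedes it below -/
import Mathlib

section
/- Suppose there exist symmetric matrices X_{i,j} (i,j ∈ {1,…,n_M}, with X_{i,j} = X_{j,i}ᵀ) such that each X_{i,j} with j ≤ i is positive semidefinite and the block matrix with blocks (H_{i,j} − X_{i,j}) is positive semidefinite. Then for every σ ∈ ℝ^{n_M} with nonnegative entries, Σ_i σ_i² H_{i,i} + Σ_{i<j} σ_i σ_j (H_{i,j} + H_{j,i}) is positive semidefinite. -/
/-!
The matrix in question is the weighted sum `∑ i j, σ i σ j H i j`. Splitting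
`H = (H - X) + X`, the first part is the compression `Σᵀ (H - X) Σ` of the positive semidefinite
block matrix by `Σ = [σ₁ I; …; σₙ I]`, and, as `σ ≥ 0`, the second is a nonnegative combination of the
matrices `X i j`, all of which are positive semidefinite (those above the diagonal being
transposes of those below).
-/

open Matrix Finset

theorem Fintype.sum_sum_eq_sum_diag_add_sum_lt {ι M : Type*} [Fintype ι] [LinearOrder ι]
    [AddCommMonoid M] (f : ι → ι → M) :
    ∑ i, ∑ j, f i j = ∑ i, f i i + ∑ i, ∑ j ∈ univ.filter (fun j => i < j), (f i j + f j i) := by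
  have htri : ∀ i j, f i j =
      (if j = i then f i j else 0) + ((if i < j then f i j else 0) + (if j < i then f i j else 0)) := by
    intro i j
    rcases lt_trichotomy i j with h | rfl | h
    · simp [h, h.ne', h.not_gt]
    · simp
    · simp [h, h.ne, h.not_gt]
  conv_lhs => enter [2, i, 2, j]; rw [htri i j]
  simp only [sum_add_distrib, sum_ite_eq', sum_filter]
  rw [sum_comm (f := fun i j => if j < i then f i j else 0)]

open scoped ComplexOrder in
theorem Matrix.PosSemidef.sum_smul_blocks {ι κ 𝕜 : Type*} [Fintype ι] [Fintype κ] [DecidableEq κ]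
    [RCLike 𝕜] {M : ι → ι → Matrix κ κ 𝕜}
    (hM : (Matrix.of fun p q : ι × κ => M p.1 q.1 p.2 q.2).PosSemidef) (σ : ι → 𝕜) :
    (∑ i, ∑ j, (star (σ i) * σ j) • M i j).PosSemidef := by
  let B : Matrix (ι × κ) κ 𝕜 := Matrix.of fun p l => σ p.1 * (1 : Matrix κ κ 𝕜) p.2 l
  convert hM.conjTranspose_mul_mul_same B using 1
  ext k l
  simp only [B, sum_apply, smul_apply, smul_eq_mul, mul_apply, conjTranspose_apply, of_apply,
    Fintype.sum_prod_type, one_apply, mul_ite, mul_one, mul_zero, apply_ite star, star_zero, ite_mul,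
    zero_mul, sum_ite_eq', mem_univ, if_true, sum_mul]
  rw [sum_comm]
  refine sum_congr rfl fun i _ => sum_congr rfl fun j _ => ?_
  ring

theorem stmt1_general {nM m : ℕ}
    (H X : Fin nM → Fin nM → Matrix (Fin m) (Fin m) ℝ)
    (hXsym : ∀ i j, X i j = (X j i)ᵀ)
    (hXpsd : ∀ i j : Fin nM, j ≤ i → (X i j).PosSemidef)
    (hblk : (Matrix.of fun p q : Fin nM × Fin m =>
        (H p.1 q.1 - X p.1 q.1) p.2 q.2).PosSemidef) :
    ∀ σ : Fin nM → ℝ, (∀ i, 0 ≤ σ i) →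
      (∑ i, (σ i ^ 2) • H i i
        + ∑ i, ∑ j ∈ Finset.univ.filter (fun j => i < j),
            (σ i * σ j) • (H i j + H j i)).PosSemidef := by
  intro σ hσ
  have hX : ∀ i j, (X i j).PosSemidef := by
    intro i j
    rcases le_total j i with h | h
    · exact hXpsd i j h
    · exact hXsym i j ▸ (hXpsd j i h).transpose
  have hexpand : ∑ i, (σ i ^ 2) • H i i
      + ∑ i, ∑ j ∈ univ.filter (fun j => i < j), (σ i * σ j) • (H i j + H j i)
      = ∑ i, ∑ j, (σ i * σ j) • H i j := by
    rw [Fintype.sum_sum_eq_sum_diag_add_sum_lt]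
    simp only [sq, smul_add, mul_comm (σ _) (σ _)]
  have hsplit : ∑ i, ∑ j, (σ i * σ j) • H i j
      = ∑ i, ∑ j, (σ i * σ j) • (H i j - X i j) + ∑ i, ∑ j, (σ i * σ j) • X i j := by
    simp only [← sum_add_distrib, ← smul_add, sub_add_cancel]
  rw [hexpand, hsplit]
  refine PosSemidef.add ?_ ?_
  · simpa only [star_trivial] using hblk.sum_smul_blocks σ
  · exact posSemidef_sum _ fun i _ => posSemidef_sum _ fun j _ =>
      (hX i j).smul (mul_nonneg (hσ i) (hσ j))

theorem stmt1 {nM m : ℕ}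
    (H X : Fin nM → Fin nM → Matrix (Fin m) (Fin m) ℝ)
    (hsym : ∀ i j, H i j = (H j i)ᵀ)
    (hXsym : ∀ i j, X i j = (X j i)ᵀ)
    (hXpsd : ∀ i j : Fin nM, j ≤ i → (X i j).PosSemidef)
    (hblk : (Matrix.of fun p q : Fin nM × Fin m =>
        (H p.1 q.1 - X p.1 q.1) p.2 q.2).PosSemidef) :
    ∀ σ : Fin nM → ℝ, (∀ i, 0 ≤ σ i) →
      (∑ i, (σ i ^ 2) • H i i
        + ∑ i, ∑ j ∈ Finset.univ.filter (fun j => i < j),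
            (σ i * σ j) • (H i j + H j i)).PosSemidef :=
  stmt1_general H X hXsym hXpsd hblk
end

section
/- Let Q be symmetric positive definite, Y ∈ ℝ^{m×n}, and set K = Y Q⁻¹. For x̄ replaced by ū ∈ ℝ^m, a ∈ ℝ^m, b ∈ ℝ: if the block matrix [[(b − aᵀū)², aᵀY],[Yᵀ a, Q]] is positive semidefinite, then for every η with ηᵀQ⁻¹η ≤ 1, the input ū + Kη satisfies aᵀ(ū + Kη) ≤ b. -/
/-!
Testing the positive semidefinite bordered matrix `[[γ, wᵀ], [w, Q]]` against `(t, v)` gives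
`γ t² + 2 t (w ⬝ v) + vᵀ Q v ≥ 0` for every `t`, so the discriminant bound yields the
Cauchy–Schwarz-type inequality `(w ⬝ v)² ≤ γ · vᵀ Q v`. With `γ = (b - aᵀū)²`, `w = Yᵀ a` and
`v = Q⁻¹ η`, this reads `(aᵀ K η)² ≤ (b - aᵀū)² · ηᵀ Q⁻¹ η ≤ (b - aᵀū)²`.
-/

open Matrix

section Bordered

variable {ι : Type*} [Fintype ι]

theorem dotProduct_fromBlocks_mulVec_bordered (γ t : ℝ) (w v : ι → ℝ)
    (Q : Matrix ι ι ℝ) :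
    Sum.elim (fun _ : Fin 1 => t) v ⬝ᵥ
        (fromBlocks (of fun _ _ : Fin 1 => γ) (of fun (_ : Fin 1) j => w j)
          (of fun i (_ : Fin 1) => w i) Q *ᵥ Sum.elim (fun _ => t) v) =
      γ * (t * t) + 2 * (w ⬝ᵥ v) * t + v ⬝ᵥ Q *ᵥ v := by
  rw [fromBlocks_mulVec, Sum.elim_comp_inl, Sum.elim_comp_inr, sumElim_dotProduct_sumElim]
  simp only [dotProduct_add]
  have hrow : (fun _ : Fin 1 => t) ⬝ᵥ (of fun (_ : Fin 1) j => w j) *ᵥ v = (w ⬝ᵥ v) * t := by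
    simp [dotProduct, mulVec, mul_comm]
  have hcol : v ⬝ᵥ (of fun i (_ : Fin 1) => w i) *ᵥ (fun _ => t) = (w ⬝ᵥ v) * t := by
    simp [dotProduct, mulVec, Finset.mul_sum, mul_comm, mul_left_comm]
  have hcorner :
      (fun _ : Fin 1 => t) ⬝ᵥ (of fun _ _ : Fin 1 => γ) *ᵥ (fun _ => t) = γ * (t * t) := by
    simp only [dotProduct, mulVec, of_apply, Fin.sum_univ_one]
    ring
  rw [hrow, hcol, hcorner]
  ring

theorem sq_dotProduct_le_of_posSemidef_fromBlocks {γ : ℝ} {w : ι → ℝ} {Q : Matrix ι ι ℝ}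
    (h : (fromBlocks (of fun _ _ : Fin 1 => γ) (of fun (_ : Fin 1) j => w j)
      (of fun i (_ : Fin 1) => w i) Q).PosSemidef) (v : ι → ℝ) :
    (w ⬝ᵥ v) ^ 2 ≤ γ * (v ⬝ᵥ Q *ᵥ v) := by
  have hquad : ∀ t : ℝ, 0 ≤ γ * (t * t) + 2 * (w ⬝ᵥ v) * t + v ⬝ᵥ Q *ᵥ v := fun t => by
    simpa [dotProduct_fromBlocks_mulVec_bordered] using
      h.dotProduct_mulVec_nonneg (Sum.elim (fun _ => t) v)
  have hdisc := discrim_le_zero hquad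
  rw [discrim] at hdisc
  linarith

end Bordered

theorem dotProduct_mulVec_inv_mulVec {ι : Type*} [Fintype ι] [DecidableEq ι]
    {Q : Matrix ι ι ℝ} (hQ : IsUnit Q.det) (η : ι → ℝ) :
    (Q⁻¹ *ᵥ η) ⬝ᵥ Q *ᵥ (Q⁻¹ *ᵥ η) = η ⬝ᵥ Q⁻¹ *ᵥ η := by
  rw [mulVec_mulVec, mul_nonsing_inv _ hQ, one_mulVec, dotProduct_comm]

theorem stmt16 {n m : ℕ} (Q : Matrix (Fin n) (Fin n) ℝ) (hQ : Q.PosDef)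
    (Y : Matrix (Fin m) (Fin n) ℝ) (ubar a : Fin m → ℝ) (b : ℝ)
    (hb : 0 ≤ b - a ⬝ᵥ ubar)
    (hblk : (Matrix.fromBlocks
        (Matrix.of fun _ _ : Fin 1 => (b - a ⬝ᵥ ubar) ^ 2)
        (Matrix.of fun (_ : Fin 1) j => (a ᵥ* Y) j)
        (Matrix.of fun i (_ : Fin 1) => (Yᵀ *ᵥ a) i)
        Q).PosSemidef) :
    ∀ η : Fin n → ℝ, η ⬝ᵥ Q⁻¹ *ᵥ η ≤ 1 →
      a ⬝ᵥ (ubar + (Y * Q⁻¹) *ᵥ η) ≤ b := by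
  intro η hη
  rw [← mulVec_transpose] at hblk
  have hcs := sq_dotProduct_le_of_posSemidef_fromBlocks hblk (Q⁻¹ *ᵥ η)
  have hw : (Yᵀ *ᵥ a) ⬝ᵥ Q⁻¹ *ᵥ η = a ⬝ᵥ (Y * Q⁻¹) *ᵥ η := by
    rw [mulVec_transpose, ← dotProduct_mulVec, mulVec_mulVec]
  rw [hw, dotProduct_mulVec_inv_mulVec (isUnit_iff_ne_zero.mpr hQ.det_pos.ne')] at hcs
  have hsq : (a ⬝ᵥ (Y * Q⁻¹) *ᵥ η) ^ 2 ≤ (b - a ⬝ᵥ ubar) ^ 2 :=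
    hcs.trans (mul_le_of_le_one_right (sq_nonneg _) hη)
  have hle := (abs_le_of_sq_le_sq' hsq hb).2
  rw [dotProduct_add]
  linarith
end
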